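/- arXiv:1301.6862 — 5 statements merged into one kernel-verified Lean document; each statement's English description precedes it below -/
import Mathlib

section
/- Every φ in the space P̂ = P₃ ⊕ span{x³y − xy³} satisfies the linear relation 4(φ(g₂)+φ(g₈)) − 5(φ(g₁)+φ(g₃)+φ(g₇)+φ(g₉)) = 4(φ(g₅)+φ(g₁₁)) − 5(φ(g₄)+φ(g₆)+φ(g₁₀)+φ(g₁₂)) among its values at the twelve Gauss points of the square [−1,1]². -/
open MvPolynomial

noncomputable def s : ℝ := Real.sqrt (3 / 5)

/-- Evaluation of a bivariate polynomial at the point `(a, b)`. -/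
noncomputable def ev (φ : MvPolynomial (Fin 2) ℝ) (a b : ℝ) : ℝ := eval ![a, b] φ

/-!
Along each edge of the square, a polynomial of degree at most 3 in each variable separately
(a space containing `P̂`) restricts to a cubic in the edge parameter. For a cubic `f`,
`4 f(0) - 5 (f(-s) + f(s)) = -3 (f(-1) + f(1))`: odd terms cancel on both sides, and the even
part `a + c t²` gives `-6a - 10 c s² = -6a - 6c` since `s² = 3/5`. Hence both sides of the
relation equal `-3` times the sum of the values at the four corners.
-/

theorem s_sq : s ^ 2 = 3 / 5 := Real.sq_sqrt (by norm_num)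

theorem gauss_combination_eq_of_natDegree_le_three {f : Polynomial ℝ}
    (hf : f.natDegree ≤ 3) :
    4 * f.eval 0 - 5 * (f.eval (-s) + f.eval s) = -3 * (f.eval (-1) + f.eval 1) := by
  simp only [Polynomial.eval_eq_sum_range' (Nat.lt_succ_of_le hf), Finset.sum_range_succ,
    Finset.sum_range_zero]
  linear_combination (-10 * f.coeff 2) * s_sq

theorem gauss_combination_row {φ : MvPolynomial (Fin 2) ℝ} (hφ : degreeOf 0 φ ≤ 3) (b : ℝ) :
    4 * ev φ 0 b - 5 * (ev φ (-s) b + ev φ s b) = -3 * (ev φ (-1) b + ev φ 1 b) := by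
  have hrow (a : ℝ) : ev φ a b = ((finSuccEquiv ℝ 1 φ).map (eval ![b])).eval a :=
    eval_eq_eval_mv_eval' ![b] a φ
  simp only [hrow]
  refine gauss_combination_eq_of_natDegree_le_three ?_
  exact Polynomial.natDegree_map_le.trans ((natDegree_finSuccEquiv φ).trans_le hφ)

theorem ev_rename_swap (φ : MvPolynomial (Fin 2) ℝ) (a b : ℝ) :
    ev (rename (Equiv.swap 0 1) φ) a b = ev φ b a := by
  have hswap : ![a, b] ∘ Equiv.swap 0 1 = ![b, a] := by
    ext i
    fin_cases i <;> rfl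
  rw [ev, eval_rename, hswap, ev]

theorem gauss_combination_column {φ : MvPolynomial (Fin 2) ℝ} (hφ : degreeOf 1 φ ≤ 3) (a : ℝ) :
    4 * ev φ a 0 - 5 * (ev φ a (-s) + ev φ a s) = -3 * (ev φ a (-1) + ev φ a 1) := by
  have hswap : degreeOf 0 (rename (Equiv.swap 0 1) φ) ≤ 3 := by
    simpa using (degreeOf_rename_of_injective (Equiv.swap (0 : Fin 2) 1).injective 1).trans_le hφ
  simpa only [ev_rename_swap] using gauss_combination_row hswap a

theorem gauss_values_relation_of_degreeOf_le {φ : MvPolynomial (Fin 2) ℝ}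
    (hφ : ∀ i, degreeOf i φ ≤ 3) :
    4 * (ev φ 0 (-1) + ev φ 0 1)
      - 5 * (ev φ (-s) (-1) + ev φ s (-1) + ev φ s 1 + ev φ (-s) 1)
    = 4 * (ev φ 1 0 + ev φ (-1) 0)
      - 5 * (ev φ 1 (-s) + ev φ 1 s + ev φ (-1) s + ev φ (-1) (-s)) := by
  have hbottom := gauss_combination_row (hφ 0) (-1)
  have htop := gauss_combination_row (hφ 0) 1
  have hleft := gauss_combination_column (hφ 1) (-1)
  have hright := gauss_combination_column (hφ 1) 1
  linarith

theorem degreeOf_X_pow_three_mul_X_sub_X_mul_X_pow_three_le (i : Fin 2) :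
    degreeOf i (X 0 ^ 3 * X 1 - X 0 * X 1 ^ 3 : MvPolynomial (Fin 2) ℝ) ≤ 3 := by
  refine (degreeOf_sub_le _ _ _).trans (max_le ?_ ?_) <;>
    refine (degreeOf_mul_le _ _ _).trans ?_ <;>
    fin_cases i <;> simp [degreeOf_X_pow_of_ne, degreeOf_X_of_ne]

/-- Proposition 2.2: every `φ ∈ P̂ = P₃ ⊕ span{x³y - xy³}` satisfies the linear relation
`4(φ(g₂)+φ(g₈)) - 5(φ(g₁)+φ(g₃)+φ(g₇)+φ(g₉)) = 4(φ(g₅)+φ(g₁₁)) - 5(φ(g₄)+φ(g₆)+φ(g₁₀)+φ(g₁₂))`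
among the values at the twelve Gauss points of `[-1,1]²`. -/
theorem gauss_values_relation (φ : MvPolynomial (Fin 2) ℝ)
    (hφ : ∃ (p : MvPolynomial (Fin 2) ℝ) (c : ℝ), p.totalDegree ≤ 3 ∧
      φ = p + C c * (X 0 ^ 3 * X 1 - X 0 * X 1 ^ 3)) :
    4 * (ev φ 0 (-1) + ev φ 0 1)
      - 5 * (ev φ (-s) (-1) + ev φ s (-1) + ev φ s 1 + ev φ (-s) 1)
    = 4 * (ev φ 1 0 + ev φ (-1) 0)
      - 5 * (ev φ 1 (-s) + ev φ 1 s + ev φ (-1) s + ev φ (-1) (-s)) := by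
  obtain ⟨p, c, hp, rfl⟩ := hφ
  refine gauss_values_relation_of_degreeOf_le fun i => ?_
  refine (degreeOf_add_le _ _ _).trans (max_le ?_ ?_)
  · exact (degreeOf_le_totalDegree p i).trans hp
  · exact (degreeOf_C_mul_le _ _ _).trans (degreeOf_X_pow_three_mul_X_sub_X_mul_X_pow_three_le i)
end

section
/- If φ belongs to the space P̂ = P₃ ⊕ span{x³y − xy³} and φ vanishes at the eight non-midpoint Gauss points g₁, g₃, g₄, g₆, g₇, g₉, g₁₀, g₁₂ of the square [−1,1]², then there exist real numbers a₁, a₂, a₃ such that φ(x,y) = (x² + y² − 8/5)(a₁x + a₂y + a₃). -/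
open MvPolynomial

set_option maxHeartbeats 1000000

lemma fin2_fs (m : Fin 2 →₀ ℕ) : m = Finsupp.single 0 (m 0) + Finsupp.single 1 (m 1) := by
  ext i
  fin_cases i <;> simp [Finsupp.single_apply]

lemma fs_eq_iff (a b i j : ℕ) :
    (Finsupp.single 0 a + Finsupp.single 1 b : Fin 2 →₀ ℕ) = Finsupp.single 0 i + Finsupp.single 1 j ↔ a = i ∧ b = j := by
  constructor
  · intro h
    have h0 := congrArg (fun f => f 0) h
    have h1 := congrArg (fun f => f 1) h
    simp [Finsupp.single_apply] at h0 h1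
    exact ⟨h0, h1⟩
  · rintro ⟨rfl, rfl⟩; rfl

noncomputable def cf (i j : ℕ) (p : MvPolynomial (Fin 2) ℝ) : ℝ :=
  coeff (Finsupp.single 0 i + Finsupp.single 1 j) p

lemma term_eq (r : ℝ) (a b : ℕ) :
    C r * X 0 ^ a * X 1 ^ b = monomial (R := ℝ) (Finsupp.single (0 : Fin 2) a + Finsupp.single 1 b) r := by
  rw [X_pow_eq_monomial, X_pow_eq_monomial, C_apply, monomial_mul, monomial_mul]
  simp

lemma rep (p : MvPolynomial (Fin 2) ℝ) (hd : p.totalDegree ≤ 3) :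
    p = C (cf 0 0 p) + C (cf 1 0 p) * X 0 + C (cf 0 1 p) * X 1
      + C (cf 2 0 p) * X 0 ^ 2 + C (cf 1 1 p) * X 0 * X 1 + C (cf 0 2 p) * X 1 ^ 2
      + C (cf 3 0 p) * X 0 ^ 3 + C (cf 2 1 p) * X 0 ^ 2 * X 1
      + C (cf 1 2 p) * X 0 * X 1 ^ 2 + C (cf 0 3 p) * X 1 ^ 3 := by
  have hrw : ∀ (r : ℝ) (a b : ℕ), C r * X 0 ^ a * X 1 ^ b
      = monomial (R := ℝ) (Finsupp.single (0 : Fin 2) a + Finsupp.single 1 b) r := term_eq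
  ext m
  obtain ⟨i, j, rfl⟩ : ∃ i j, m = Finsupp.single 0 i + Finsupp.single 1 j :=
    ⟨m 0, m 1, fin2_fs m⟩
  by_cases h : i + j ≤ 3
  · rw [show (C (cf 0 0 p) : MvPolynomial (Fin 2) ℝ) = C (cf 0 0 p) * X 0 ^ 0 * X 1 ^ 0 by ring,
      show (C (cf 1 0 p) * X 0 : MvPolynomial (Fin 2) ℝ) = C (cf 1 0 p) * X 0 ^ 1 * X 1 ^ 0 by ring,
      show (C (cf 0 1 p) * X 1 : MvPolynomial (Fin 2) ℝ) = C (cf 0 1 p) * X 0 ^ 0 * X 1 ^ 1 by ring,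
      show (C (cf 2 0 p) * X 0 ^ 2 : MvPolynomial (Fin 2) ℝ) = C (cf 2 0 p) * X 0 ^ 2 * X 1 ^ 0 by ring,
      show (C (cf 1 1 p) * X 0 * X 1 : MvPolynomial (Fin 2) ℝ) = C (cf 1 1 p) * X 0 ^ 1 * X 1 ^ 1 by ring,
      show (C (cf 0 2 p) * X 1 ^ 2 : MvPolynomial (Fin 2) ℝ) = C (cf 0 2 p) * X 0 ^ 0 * X 1 ^ 2 by ring,
      show (C (cf 3 0 p) * X 0 ^ 3 : MvPolynomial (Fin 2) ℝ) = C (cf 3 0 p) * X 0 ^ 3 * X 1 ^ 0 by ring,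
      show (C (cf 2 1 p) * X 0 ^ 2 * X 1 : MvPolynomial (Fin 2) ℝ) = C (cf 2 1 p) * X 0 ^ 2 * X 1 ^ 1 by ring,
      show (C (cf 1 2 p) * X 0 * X 1 ^ 2 : MvPolynomial (Fin 2) ℝ) = C (cf 1 2 p) * X 0 ^ 1 * X 1 ^ 2 by ring,
      show (C (cf 0 3 p) * X 1 ^ 3 : MvPolynomial (Fin 2) ℝ) = C (cf 0 3 p) * X 0 ^ 0 * X 1 ^ 3 by ring]
    simp only [hrw, coeff_add, coeff_monomial, fs_eq_iff]
    have hi : i ≤ 3 := by omega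
    have hj : j ≤ 3 := by omega
    interval_cases i <;> interval_cases j <;> first | omega | simp [cf]
  · have hz : coeff (Finsupp.single 0 i + Finsupp.single 1 j) p = 0 := by
      apply coeff_eq_zero_of_totalDegree_lt
      calc p.totalDegree ≤ 3 := hd
        _ < i + j := by omega
        _ ≤ _ := by
          set m : Fin 2 →₀ ℕ := Finsupp.single 0 i + Finsupp.single 1 j with hm
          have h1 : ∑ k ∈ m.support, m k = ∑ k : Fin 2, m k := by
            refine Finset.sum_subset (Finset.subset_univ _) ?_
            intro x _ hx
            exact Finsupp.notMem_support_iff.mp hx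
          rw [h1, Fin.sum_univ_two]
          simp [hm, Finsupp.single_apply]
    rw [hz]
    rw [show (C (cf 0 0 p) : MvPolynomial (Fin 2) ℝ) = C (cf 0 0 p) * X 0 ^ 0 * X 1 ^ 0 by ring,
      show (C (cf 1 0 p) * X 0 : MvPolynomial (Fin 2) ℝ) = C (cf 1 0 p) * X 0 ^ 1 * X 1 ^ 0 by ring,
      show (C (cf 0 1 p) * X 1 : MvPolynomial (Fin 2) ℝ) = C (cf 0 1 p) * X 0 ^ 0 * X 1 ^ 1 by ring,
      show (C (cf 2 0 p) * X 0 ^ 2 : MvPolynomial (Fin 2) ℝ) = C (cf 2 0 p) * X 0 ^ 2 * X 1 ^ 0 by ring,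
      show (C (cf 1 1 p) * X 0 * X 1 : MvPolynomial (Fin 2) ℝ) = C (cf 1 1 p) * X 0 ^ 1 * X 1 ^ 1 by ring,
      show (C (cf 0 2 p) * X 1 ^ 2 : MvPolynomial (Fin 2) ℝ) = C (cf 0 2 p) * X 0 ^ 0 * X 1 ^ 2 by ring,
      show (C (cf 3 0 p) * X 0 ^ 3 : MvPolynomial (Fin 2) ℝ) = C (cf 3 0 p) * X 0 ^ 3 * X 1 ^ 0 by ring,
      show (C (cf 2 1 p) * X 0 ^ 2 * X 1 : MvPolynomial (Fin 2) ℝ) = C (cf 2 1 p) * X 0 ^ 2 * X 1 ^ 1 by ring,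
      show (C (cf 1 2 p) * X 0 * X 1 ^ 2 : MvPolynomial (Fin 2) ℝ) = C (cf 1 2 p) * X 0 ^ 1 * X 1 ^ 2 by ring,
      show (C (cf 0 3 p) * X 1 ^ 3 : MvPolynomial (Fin 2) ℝ) = C (cf 0 3 p) * X 0 ^ 0 * X 1 ^ 3 by ring]
    simp only [hrw, coeff_add, coeff_monomial, fs_eq_iff]
    have hne : ∀ a b : ℕ, a + b ≤ 3 → ¬(a = i ∧ b = j) := by
      rintro a b hab ⟨rfl, rfl⟩; omega
    rw [if_neg (hne 0 0 (by norm_num)), if_neg (hne 1 0 (by norm_num)),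
      if_neg (hne 0 1 (by norm_num)), if_neg (hne 2 0 (by norm_num)),
      if_neg (hne 1 1 (by norm_num)), if_neg (hne 0 2 (by norm_num)),
      if_neg (hne 3 0 (by norm_num)), if_neg (hne 2 1 (by norm_num)),
      if_neg (hne 1 2 (by norm_num)), if_neg (hne 0 3 (by norm_num))]
    norm_num

/-- Intermediate step in the proof of Lemma 2.3: if `φ ∈ P̂ = P₃ ⊕ span{x³y - xy³}`
vanishes at the eight non-midpoint Gauss points of `[-1,1]²`, then
`φ(x,y) = (x² + y² - 8/5)(a₁x + a₂y + a₃)` for some reals `a₁, a₂, a₃`. -/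
theorem factorization_through_circle (φ : MvPolynomial (Fin 2) ℝ)
    (hφ : ∃ (p : MvPolynomial (Fin 2) ℝ) (c : ℝ), p.totalDegree ≤ 3 ∧
      φ = p + C c * (X 0 ^ 3 * X 1 - X 0 * X 1 ^ 3))
    (h1 : ev φ (-s) (-1) = 0) (h3 : ev φ s (-1) = 0)
    (h4 : ev φ 1 (-s) = 0) (h6 : ev φ 1 s = 0)
    (h7 : ev φ s 1 = 0) (h9 : ev φ (-s) 1 = 0)
    (h10 : ev φ (-1) s = 0) (h12 : ev φ (-1) (-s) = 0) :
    ∃ a₁ a₂ a₃ : ℝ,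
      φ = (X 0 ^ 2 + X 1 ^ 2 - C (8 / 5)) * (C a₁ * X 0 + C a₂ * X 1 + C a₃) := by
  obtain ⟨p, c, hd, hpc⟩ := hφ
  have hp := rep p hd
  set a00 := cf 0 0 p with ha00
  set a10 := cf 1 0 p with ha10
  set a01 := cf 0 1 p with ha01
  set a20 := cf 2 0 p with ha20
  set a11 := cf 1 1 p with ha11
  set a02 := cf 0 2 p with ha02
  set a30 := cf 3 0 p with ha30
  set a21 := cf 2 1 p with ha21
  set a12 := cf 1 2 p with ha12
  set a03 := cf 0 3 p with ha03
  have hφ' : φ = C a00 + C a10 * X 0 + C a01 * X 1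
      + C a20 * X 0 ^ 2 + C a11 * X 0 * X 1 + C a02 * X 1 ^ 2
      + C a30 * X 0 ^ 3 + C a21 * X 0 ^ 2 * X 1
      + C a12 * X 0 * X 1 ^ 2 + C a03 * X 1 ^ 3
      + C c * (X 0 ^ 3 * X 1 - X 0 * X 1 ^ 3) := by
    rw [hpc, hp]
  have heval : ∀ x y : ℝ, ev φ x y = a00 + a10*x + a01*y + a20*x^2 + a11*x*y
      + a02*y^2 + a30*x^3 + a21*x^2*y + a12*x*y^2 + a03*y^3 + c*(x^3*y - x*y^3) := by
    intro x y
    rw [ev, hφ']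
    simp only [eval_add, eval_mul, eval_sub, eval_pow, eval_C, eval_X,
      Matrix.cons_val_zero, Matrix.cons_val_one, Matrix.head_cons]
  rw [heval] at h1 h3 h4 h6 h7 h9 h10 h12
  have hs2 : s ^ 2 = 3 / 5 := Real.sq_sqrt (by norm_num)
  have hspos : (0:ℝ) < s := Real.sqrt_pos.mpr (by norm_num)
  have R1 : a00 - a01 + (3/5)*(a20 - a21) + a02 - a03 = 0 := by
    linear_combination h1/2 + h3/2 + (a21 - a20) * hs2
  have R2 : a00 + a01 + (3/5)*(a20 + a21) + a02 + a03 = 0 := by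
    linear_combination h7/2 + h9/2 + (-(a20 + a21)) * hs2
  have R3 : a00 + a10 + a20 + a30 + (3/5)*(a02 + a12) = 0 := by
    linear_combination h4/2 + h6/2 + (-(a02 + a12)) * hs2
  have R4 : a00 - a10 + a20 - a30 + (3/5)*(a02 - a12) = 0 := by
    linear_combination h10/2 + h12/2 + (a12 - a02) * hs2
  have sO1 : s * (a10 - a11 + (3/5)*a30 + a12 + (2/5)*c) = 0 := by
    linear_combination h3/2 - h1/2 + (c*s - a30*s) * hs2
  have sO2 : s * (a10 + a11 + (3/5)*a30 + a12 - (2/5)*c) = 0 := by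
    linear_combination h7/2 - h9/2 + (-(a30*s + c*s)) * hs2
  have sO3 : s * (a01 + a11 + a21 + (3/5)*a03 + (2/5)*c) = 0 := by
    linear_combination h6/2 - h4/2 + (c*s - a03*s) * hs2
  have sO4 : s * (a01 - a11 + a21 + (3/5)*a03 - (2/5)*c) = 0 := by
    linear_combination h10/2 - h12/2 + (-(a03*s + c*s)) * hs2
  have hs0 : s ≠ 0 := ne_of_gt hspos
  have O1 := (mul_eq_zero.mp sO1).resolve_left hs0
  have O2 := (mul_eq_zero.mp sO2).resolve_left hs0
  have O3 := (mul_eq_zero.mp sO3).resolve_left hs0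
  have O4 := (mul_eq_zero.mp sO4).resolve_left hs0
  have hc : c = 0 := by linarith
  have h11' : a11 = 0 := by linarith
  have h02 : a02 = a20 := by linarith
  have h00 : a00 + 8/5 * a20 = 0 := by linarith
  have h12' : a12 = a30 := by linarith
  have h10' : a10 + 8/5 * a30 = 0 := by linarith
  have h03 : a03 = a21 := by linarith
  have h01 : a01 + 8/5 * a21 = 0 := by linarith
  refine ⟨a30, a21, a20, ?_⟩
  have f00 : (C a00 : MvPolynomial (Fin 2) ℝ) + C (8/5 : ℝ) * C a20 = 0 := by
    rw [← C_mul, ← C_add, h00, C_0]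
  have f10 : (C a10 : MvPolynomial (Fin 2) ℝ) + C (8/5 : ℝ) * C a30 = 0 := by
    rw [← C_mul, ← C_add, h10', C_0]
  have f01 : (C a01 : MvPolynomial (Fin 2) ℝ) + C (8/5 : ℝ) * C a21 = 0 := by
    rw [← C_mul, ← C_add, h01, C_0]
  have f11 : (C a11 : MvPolynomial (Fin 2) ℝ) = 0 := by rw [h11', C_0]
  have f02 : (C a02 : MvPolynomial (Fin 2) ℝ) = C a20 := by rw [h02]
  have f12 : (C a12 : MvPolynomial (Fin 2) ℝ) = C a30 := by rw [h12']
  have f03 : (C a03 : MvPolynomial (Fin 2) ℝ) = C a21 := by rw [h03]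
  have fc : (C c : MvPolynomial (Fin 2) ℝ) = 0 := by rw [hc, C_0]
  rw [hφ']
  linear_combination (norm := ring1) f00 + X 0 * f10 + X 1 * f01 + X 0 * X 1 * f11
    + X 1 ^ 2 * f02 + X 0 * X 1 ^ 2 * f12 + X 1 ^ 3 * f03
    + (X 0 ^ 3 * X 1 - X 0 * X 1 ^ 3) * fc
end

section
/- Let φ belong to the space P̂ = P₃ ⊕ span{x³y − xy³} and suppose φ vanishes at the three Gauss points g₁ = (−√(3/5),−1), g₂ = (0,−1), g₃ = (√(3/5),−1) of the bottom edge of [−1,1]². Then for every bivariate polynomial q of degree at most 2 in each variable separately (q ∈ Q₂), one has ∫_{−1}^{1} φ(t,−1)·q(t,−1) dt = 0. -/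
/-!
On the edge `y = -1`, `φ` restricts to a cubic (the bubble `x³y - xy³` has degree 3 in `x`) and
`q` to a quadratic, so their product has degree at most 5. The three-point Gauss–Legendre rule
integrates such polynomials exactly, and its nodes are the given Gauss points, where `φ` vanishes.
-/

open MvPolynomial

noncomputable def gaussLegendreThree (f : ℝ → ℝ) : ℝ :=
  5 / 9 * f (-s) + 8 / 9 * f 0 + 5 / 9 * f s

lemma integral_pow_eq_gaussLegendreThree {k : ℕ} (hk : k ≤ 5) :
    ∫ t in (-1 : ℝ)..1, t ^ k = gaussLegendreThree (· ^ k) := by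
  have h2 : s ^ 2 = 3 / 5 := Real.sq_sqrt (by norm_num)
  have h3 : s ^ 3 = 3 / 5 * s := by rw [pow_succ, h2]
  have h4 : s ^ 4 = 9 / 25 := by rw [show 4 = 2 * 2 by rfl, pow_mul, h2]; norm_num
  have h5 : s ^ 5 = 9 / 25 * s := by rw [pow_succ, h4]
  interval_cases k <;> simp [gaussLegendreThree, integral_pow] <;> linarith

lemma integral_eq_gaussLegendreThree {f : Polynomial ℝ} (hf : f.natDegree ≤ 5) :
    ∫ t in (-1 : ℝ)..1, f.eval t = gaussLegendreThree f.eval := by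
  have hsum : ∀ t, f.eval t = ∑ k ∈ Finset.range 6, f.coeff k * t ^ k := fun t =>
    Polynomial.eval_eq_sum_range' (by omega) t
  simp_rw [hsum]
  rw [intervalIntegral.integral_finsetSum fun k _ =>
    (by fun_prop : Continuous fun t : ℝ => f.coeff k * t ^ k).intervalIntegrable _ _]
  simp only [intervalIntegral.integral_const_mul, gaussLegendreThree, Finset.mul_sum,
    ← Finset.sum_add_distrib]
  refine Finset.sum_congr rfl fun k hk => ?_
  rw [integral_pow_eq_gaussLegendreThree (by simp at hk; omega), gaussLegendreThree]
  ring

/-- `finSuccEquiv` makes `f` a polynomial in `X 0` with coefficients in `X 1`, which are then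
evaluated at `c`. -/
noncomputable def restrictY {R : Type*} [CommRing R] (c : R) (f : MvPolynomial (Fin 2) R) :
    Polynomial R :=
  (finSuccEquiv R 1 f).map (eval ![c])

lemma eval_restrictY {R : Type*} [CommRing R] (c t : R) (f : MvPolynomial (Fin 2) R) :
    (restrictY c f).eval t = eval ![t, c] f :=
  (eval_eq_eval_mv_eval' ![c] t f).symm

lemma natDegree_restrictY_le {R : Type*} [CommRing R] (c : R) (f : MvPolynomial (Fin 2) R) :
    (restrictY c f).natDegree ≤ f.degreeOf 0 :=
  Polynomial.natDegree_map_le.trans (natDegree_finSuccEquiv f).le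

lemma degreeOf_zero_bubble_le {R : Type*} [CommRing R] :
    (X 0 ^ 3 * X 1 - X 0 * X 1 ^ 3 : MvPolynomial (Fin 2) R).degreeOf 0 ≤ 3 := by
  rcases subsingleton_or_nontrivial R with hR | hR
  · simp [Subsingleton.elim (X 0 ^ 3 * X 1 - X 0 * X 1 ^ 3 : MvPolynomial (Fin 2) R) 0]
  refine (degreeOf_sub_le _ _ _).trans (max_le ?_ ?_)
  · refine (degreeOf_mul_le _ _ _).trans ?_
    simp [degreeOf_X_of_ne]
  · refine (degreeOf_mul_le _ _ _).trans ?_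
    simp [degreeOf_X_pow_of_ne]

lemma degreeOf_zero_add_C_mul_bubble_le {R : Type*} [CommRing R] {p : MvPolynomial (Fin 2) R}
    (hp : p.totalDegree ≤ 3) (c : R) :
    (p + C c * (X 0 ^ 3 * X 1 - X 0 * X 1 ^ 3)).degreeOf 0 ≤ 3 :=
  (degreeOf_add_le _ _ _).trans <| max_le ((degreeOf_le_totalDegree p 0).trans hp)
    ((degreeOf_C_mul_le _ _ _).trans degreeOf_zero_bubble_le)

theorem patch_test_orthogonality_general (φ q : MvPolynomial (Fin 2) ℝ)
    (hφ : ∃ (p : MvPolynomial (Fin 2) ℝ) (c : ℝ), p.totalDegree ≤ 3 ∧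
      φ = p + C c * (X 0 ^ 3 * X 1 - X 0 * X 1 ^ 3))
    (h1 : eval ![-s, -1] φ = 0) (h2 : eval ![(0 : ℝ), -1] φ = 0) (h3 : eval ![s, -1] φ = 0)
    (hq0 : q.degreeOf 0 ≤ 2) :
    ∫ t in (-1 : ℝ)..1, (eval ![t, -1] φ) * (eval ![t, -1] q) = 0 := by
  obtain ⟨p, c, hp, hφ⟩ := hφ
  have hφ3 : (restrictY (-1) φ).natDegree ≤ 3 :=
    (natDegree_restrictY_le _ _).trans (hφ ▸ degreeOf_zero_add_C_mul_bubble_le hp c)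
  have hq2 : (restrictY (-1) q).natDegree ≤ 2 := (natDegree_restrictY_le _ _).trans hq0
  have hdeg : (restrictY (-1) φ * restrictY (-1) q).natDegree ≤ 5 :=
    Polynomial.natDegree_mul_le.trans (by omega)
  simp_rw [← eval_restrictY, ← Polynomial.eval_mul] at h1 h2 h3 ⊢
  rw [integral_eq_gaussLegendreThree hdeg, gaussLegendreThree]
  simp [h1, h2, h3]

/-- Lemma 2.6 (patch-test orthogonality): if `φ ∈ P̂ = P₃ ⊕ span{x³y - xy³}` vanishes at
the three Gauss points of the bottom edge of `[-1,1]²`, then for every `q ∈ Q₂` (degree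
at most 2 in each variable separately) the edge integral `∫ φ q` vanishes. -/
theorem patch_test_orthogonality (φ q : MvPolynomial (Fin 2) ℝ)
    (hφ : ∃ (p : MvPolynomial (Fin 2) ℝ) (c : ℝ), p.totalDegree ≤ 3 ∧
      φ = p + C c * (X 0 ^ 3 * X 1 - X 0 * X 1 ^ 3))
    (h1 : eval ![-s, -1] φ = 0) (h2 : eval ![(0 : ℝ), -1] φ = 0) (h3 : eval ![s, -1] φ = 0)
    (hq0 : q.degreeOf 0 ≤ 2) (hq1 : q.degreeOf 1 ≤ 2) :
    ∫ t in (-1 : ℝ)..1, (eval ![t, -1] φ) * (eval ![t, -1] q) = 0 :=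
  patch_test_orthogonality_general φ q hφ h1 h2 h3 hq0
end

section
/- There exists exactly one φ in the space P̂ = P₃ ⊕ span{x³y − xy³} whose values at the twelve Gauss points of [−1,1]² are: φ(g₁) = 4, φ(g₂) = 5, and φ(gⱼ) = 0 for all j ∈ {3,…,12}. -/
open MvPolynomial

/-- The twelve Gauss points of the reference square `[-1,1]²`. -/
noncomputable def g : Fin 12 → ℝ × ℝ :=
  ![(-s, -1), (0, -1), (s, -1),
    (1, -s), (1, 0), (1, s),
    (s, 1), (0, 1), (-s, 1),
    (-1, s), (-1, 0), (-1, -s)]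

noncomputable def e (i j : ℕ) : Fin 2 →₀ ℕ := Finsupp.single 0 i + Finsupp.single 1 j

lemma e_apply0 (i j : ℕ) : e i j 0 = i := by simp [e]
lemma e_apply1 (i j : ℕ) : e i j 1 = j := by simp [e, Finsupp.single_apply]

@[simp] lemma e_inj {i j i' j' : ℕ} : e i j = e i' j' ↔ i = i' ∧ j = j' := by
  constructor
  · intro h
    exact ⟨by simpa [e_apply0] using DFunLike.congr_fun h 0,
           by simpa [e_apply1] using DFunLike.congr_fun h 1⟩
  · rintro ⟨rfl, rfl⟩; rfl

lemma finsupp_fin2 (m : Fin 2 →₀ ℕ) : m = e (m 0) (m 1) := by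
  ext a; fin_cases a <;> simp [e, Finsupp.single_apply]

lemma e_sum (i j : ℕ) : ∑ x ∈ (e i j).support, e i j x = i + j := by
  have h : ∑ x ∈ (e i j).support, e i j x = ∑ x : Fin 2, e i j x :=
    Finset.sum_subset (Finset.subset_univ _)
      (fun x _ hx => Finsupp.notMem_support_iff.mp hx)
  rw [h, Fin.sum_univ_two, e_apply0, e_apply1]

lemma mono_eq (i j : ℕ) : (X 0 : MvPolynomial (Fin 2) ℝ) ^ i * X 1 ^ j = monomial (e i j) 1 := by
  rw [X_pow_eq_monomial, X_pow_eq_monomial, monomial_mul, one_mul]; rfl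

noncomputable def PE (a00 a10 a01 a20 a11 a02 a30 a21 a12 a03 : ℝ) : MvPolynomial (Fin 2) ℝ :=
  C a00 * (X 0 ^ 0 * X 1 ^ 0) + C a10 * (X 0 ^ 1 * X 1 ^ 0) + C a01 * (X 0 ^ 0 * X 1 ^ 1) +
  C a20 * (X 0 ^ 2 * X 1 ^ 0) + C a11 * (X 0 ^ 1 * X 1 ^ 1) + C a02 * (X 0 ^ 0 * X 1 ^ 2) +
  C a30 * (X 0 ^ 3 * X 1 ^ 0) + C a21 * (X 0 ^ 2 * X 1 ^ 1) + C a12 * (X 0 ^ 1 * X 1 ^ 2) +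
  C a03 * (X 0 ^ 0 * X 1 ^ 3)

lemma P3_rep (p : MvPolynomial (Fin 2) ℝ) (hp : p.totalDegree ≤ 3) :
    p = PE (coeff (e 0 0) p) (coeff (e 1 0) p) (coeff (e 0 1) p) (coeff (e 2 0) p)
        (coeff (e 1 1) p) (coeff (e 0 2) p) (coeff (e 3 0) p) (coeff (e 2 1) p)
        (coeff (e 1 2) p) (coeff (e 0 3) p) := by
  ext m
  obtain ⟨i, j, rfl⟩ : ∃ i j, m = e i j := ⟨m 0, m 1, finsupp_fin2 m⟩
  simp only [PE, mono_eq, C_mul_monomial, mul_one, coeff_add, coeff_monomial]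
  by_cases h : i + j ≤ 3
  · have hi : i ≤ 3 := by omega
    have hj : j ≤ 3 := by omega
    interval_cases i <;> interval_cases j <;>
      first
        | (exfalso; omega)
        | simp
  · have h0 : coeff (e i j) p = 0 := coeff_eq_zero_of_totalDegree_lt (by rw [e_sum]; omega)
    rw [h0]
    simp only [e_inj]
    rw [if_neg (show ¬(0 = i ∧ 0 = j) by omega), if_neg (show ¬(1 = i ∧ 0 = j) by omega),
      if_neg (show ¬(0 = i ∧ 1 = j) by omega), if_neg (show ¬(2 = i ∧ 0 = j) by omega),
      if_neg (show ¬(1 = i ∧ 1 = j) by omega), if_neg (show ¬(0 = i ∧ 2 = j) by omega),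
      if_neg (show ¬(3 = i ∧ 0 = j) by omega), if_neg (show ¬(2 = i ∧ 1 = j) by omega),
      if_neg (show ¬(1 = i ∧ 2 = j) by omega), if_neg (show ¬(0 = i ∧ 3 = j) by omega)]
    norm_num

lemma eval_expansion (a00 a10 a01 a20 a11 a02 a30 a21 a12 a03 c x y : ℝ) :
    eval ![x, y] (PE a00 a10 a01 a20 a11 a02 a30 a21 a12 a03 +
        C c * (X 0 ^ 3 * X 1 - X 0 * X 1 ^ 3)) =
      a00 + a10 * x + a01 * y + a20 * x ^ 2 + a11 * (x * y) + a02 * y ^ 2 + a30 * x ^ 3 +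
      a21 * (x ^ 2 * y) + a12 * (x * y ^ 2) + a03 * y ^ 3 + c * (x ^ 3 * y - x * y ^ 3) := by
  simp only [PE, map_add, map_sub, map_mul, map_pow, eval_C, eval_X,
    Matrix.cons_val_zero, Matrix.cons_val_one, Matrix.head_cons]
  ring

lemma td_pe (a00 a10 a01 a20 a11 a02 a30 a21 a12 a03 : ℝ) :
    (PE a00 a10 a01 a20 a11 a02 a30 a21 a12 a03).totalDegree ≤ 3 := by
  have tterm : ∀ (a : ℝ) (i j : ℕ), i + j ≤ 3 →
      (C a * (X 0 ^ i * X 1 ^ j) : MvPolynomial (Fin 2) ℝ).totalDegree ≤ 3 := by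
    intro a i j hij
    refine le_trans (totalDegree_mul _ _) ?_
    have h2 : (X 0 ^ i * X 1 ^ j : MvPolynomial (Fin 2) ℝ).totalDegree ≤ i + j :=
      le_trans (totalDegree_mul _ _) (by simp [totalDegree_X_pow])
    simp only [totalDegree_C, zero_add]
    exact le_trans h2 hij
  have hadd : ∀ q r : MvPolynomial (Fin 2) ℝ, q.totalDegree ≤ 3 → r.totalDegree ≤ 3 →
      (q + r).totalDegree ≤ 3 :=
    fun q r hq hr => le_trans (totalDegree_add _ _) (max_le hq hr)
  simp only [PE]
  refine hadd _ _ (hadd _ _ (hadd _ _ (hadd _ _ (hadd _ _ (hadd _ _ (hadd _ _ (hadd _ _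
    (hadd _ _ ?_ ?_) ?_) ?_) ?_) ?_) ?_) ?_) ?_) ?_ <;>
    exact tterm _ _ _ (by omega)

/-- Existence and uniqueness of the edge-based basis function `φ₁^{E₊}`: the unique
`φ ∈ P̂ = P₃ ⊕ span{x³y - xy³}` with `φ(g₁) = 4`, `φ(g₂) = 5` and value 0 at the
other ten Gauss points. -/
theorem edge_basis_function :
    ∃! φ : MvPolynomial (Fin 2) ℝ,
      (∃ (p : MvPolynomial (Fin 2) ℝ) (c : ℝ), p.totalDegree ≤ 3 ∧
        φ = p + C c * (X 0 ^ 3 * X 1 - X 0 * X 1 ^ 3)) ∧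
      eval ![(g 0).1, (g 0).2] φ = 4 ∧
      eval ![(g 1).1, (g 1).2] φ = 5 ∧
      ∀ j : Fin 12, j ≠ 0 → j ≠ 1 → eval ![(g j).1, (g j).2] φ = 0 := by
  have hs2 : s ^ 2 = 3 / 5 := Real.sq_sqrt (by norm_num)
  refine ⟨PE ((5/2)) ((-25/6)*s) ((-5/2)) ((-5/2)) ((5/6)*s) 0 ((25/6)*s) ((5/2)) 0 0 + C ((-25/12)*s) * (X 0 ^ 3 * X 1 - X 0 * X 1 ^ 3), ⟨⟨PE ((5/2)) ((-25/6)*s) ((-5/2)) ((-5/2)) ((5/6)*s) 0 ((25/6)*s) ((5/2)) 0 0, ((-25/12)*s), td_pe _ _ _ _ _ _ _ _ _ _, rfl⟩, ?_, ?_, ?_⟩, ?_⟩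
  · have t : eval ![(g 0).1, (g 0).2] (PE ((5/2)) ((-25/6)*s) ((-5/2)) ((-5/2)) ((5/6)*s) 0 ((25/6)*s) ((5/2)) 0 0 + C ((-25/12)*s) * (X 0 ^ 3 * X 1 - X 0 * X 1 ^ 3)) =
        ((5/2)) + ((-25/6)*s) * (-s) + ((-5/2)) * (-1) + ((-5/2)) * (-s) ^ 2 + ((5/6)*s) * ((-s) * (-1)) + 0 * (-1) ^ 2 + ((25/6)*s) * (-s) ^ 3 + ((5/2)) * ((-s) ^ 2 * (-1)) + 0 * ((-s) * (-1) ^ 2) + 0 * (-1) ^ 3 + ((-25/12)*s) * ((-s) ^ 3 * (-1) - (-s) * (-1) ^ 3) :=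
      eval_expansion _ _ _ _ _ _ _ _ _ _ _ (-s) (-1)
    exact t.trans (by linear_combination ((-5/3) + (-25/4)*s^2) * hs2)
  · have t : eval ![(g 1).1, (g 1).2] (PE ((5/2)) ((-25/6)*s) ((-5/2)) ((-5/2)) ((5/6)*s) 0 ((25/6)*s) ((5/2)) 0 0 + C ((-25/12)*s) * (X 0 ^ 3 * X 1 - X 0 * X 1 ^ 3)) =
        ((5/2)) + ((-25/6)*s) * 0 + ((-5/2)) * (-1) + ((-5/2)) * 0 ^ 2 + ((5/6)*s) * (0 * (-1)) + 0 * (-1) ^ 2 + ((25/6)*s) * 0 ^ 3 + ((5/2)) * (0 ^ 2 * (-1)) + 0 * (0 * (-1) ^ 2) + 0 * (-1) ^ 3 + ((-25/12)*s) * (0 ^ 3 * (-1) - 0 * (-1) ^ 3) :=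
      eval_expansion _ _ _ _ _ _ _ _ _ _ _ 0 (-1)
    exact t.trans (by linear_combination ((0:ℝ)) * hs2)
  · intro j hj0 hj1
    fin_cases j
    · exact absurd rfl hj0
    · exact absurd rfl hj1
    · have t : eval ![(g 2).1, (g 2).2] (PE ((5/2)) ((-25/6)*s) ((-5/2)) ((-5/2)) ((5/6)*s) 0 ((25/6)*s) ((5/2)) 0 0 + C ((-25/12)*s) * (X 0 ^ 3 * X 1 - X 0 * X 1 ^ 3)) =
          ((5/2)) + ((-25/6)*s) * s + ((-5/2)) * (-1) + ((-5/2)) * s ^ 2 + ((5/6)*s) * (s * (-1)) + 0 * (-1) ^ 2 + ((25/6)*s) * s ^ 3 + ((5/2)) * (s ^ 2 * (-1)) + 0 * (s * (-1) ^ 2) + 0 * (-1) ^ 3 + ((-25/12)*s) * (s ^ 3 * (-1) - s * (-1) ^ 3) :=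
        eval_expansion _ _ _ _ _ _ _ _ _ _ _ s (-1)
      exact t.trans (by linear_combination ((-25/3) + (25/4)*s^2) * hs2)
    · have t : eval ![(g 3).1, (g 3).2] (PE ((5/2)) ((-25/6)*s) ((-5/2)) ((-5/2)) ((5/6)*s) 0 ((25/6)*s) ((5/2)) 0 0 + C ((-25/12)*s) * (X 0 ^ 3 * X 1 - X 0 * X 1 ^ 3)) =
          ((5/2)) + ((-25/6)*s) * 1 + ((-5/2)) * (-s) + ((-5/2)) * 1 ^ 2 + ((5/6)*s) * (1 * (-s)) + 0 * (-s) ^ 2 + ((25/6)*s) * 1 ^ 3 + ((5/2)) * (1 ^ 2 * (-s)) + 0 * (1 * (-s) ^ 2) + 0 * (-s) ^ 3 + ((-25/12)*s) * (1 ^ 3 * (-s) - 1 * (-s) ^ 3) :=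
        eval_expansion _ _ _ _ _ _ _ _ _ _ _ 1 (-s)
      exact t.trans (by linear_combination ((-25/12)*s^2) * hs2)
    · have t : eval ![(g 4).1, (g 4).2] (PE ((5/2)) ((-25/6)*s) ((-5/2)) ((-5/2)) ((5/6)*s) 0 ((25/6)*s) ((5/2)) 0 0 + C ((-25/12)*s) * (X 0 ^ 3 * X 1 - X 0 * X 1 ^ 3)) =
          ((5/2)) + ((-25/6)*s) * 1 + ((-5/2)) * 0 + ((-5/2)) * 1 ^ 2 + ((5/6)*s) * (1 * 0) + 0 * 0 ^ 2 + ((25/6)*s) * 1 ^ 3 + ((5/2)) * (1 ^ 2 * 0) + 0 * (1 * 0 ^ 2) + 0 * 0 ^ 3 + ((-25/12)*s) * (1 ^ 3 * 0 - 1 * 0 ^ 3) :=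
        eval_expansion _ _ _ _ _ _ _ _ _ _ _ 1 0
      exact t.trans (by linear_combination ((0:ℝ)) * hs2)
    · have t : eval ![(g 5).1, (g 5).2] (PE ((5/2)) ((-25/6)*s) ((-5/2)) ((-5/2)) ((5/6)*s) 0 ((25/6)*s) ((5/2)) 0 0 + C ((-25/12)*s) * (X 0 ^ 3 * X 1 - X 0 * X 1 ^ 3)) =
          ((5/2)) + ((-25/6)*s) * 1 + ((-5/2)) * s + ((-5/2)) * 1 ^ 2 + ((5/6)*s) * (1 * s) + 0 * s ^ 2 + ((25/6)*s) * 1 ^ 3 + ((5/2)) * (1 ^ 2 * s) + 0 * (1 * s ^ 2) + 0 * s ^ 3 + ((-25/12)*s) * (1 ^ 3 * s - 1 * s ^ 3) :=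
        eval_expansion _ _ _ _ _ _ _ _ _ _ _ 1 s
      exact t.trans (by linear_combination ((25/12)*s^2) * hs2)
    · have t : eval ![(g 6).1, (g 6).2] (PE ((5/2)) ((-25/6)*s) ((-5/2)) ((-5/2)) ((5/6)*s) 0 ((25/6)*s) ((5/2)) 0 0 + C ((-25/12)*s) * (X 0 ^ 3 * X 1 - X 0 * X 1 ^ 3)) =
          ((5/2)) + ((-25/6)*s) * s + ((-5/2)) * 1 + ((-5/2)) * s ^ 2 + ((5/6)*s) * (s * 1) + 0 * 1 ^ 2 + ((25/6)*s) * s ^ 3 + ((5/2)) * (s ^ 2 * 1) + 0 * (s * 1 ^ 2) + 0 * 1 ^ 3 + ((-25/12)*s) * (s ^ 3 * 1 - s * 1 ^ 3) :=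
        eval_expansion _ _ _ _ _ _ _ _ _ _ _ s 1
      exact t.trans (by linear_combination ((25/12)*s^2) * hs2)
    · have t : eval ![(g 7).1, (g 7).2] (PE ((5/2)) ((-25/6)*s) ((-5/2)) ((-5/2)) ((5/6)*s) 0 ((25/6)*s) ((5/2)) 0 0 + C ((-25/12)*s) * (X 0 ^ 3 * X 1 - X 0 * X 1 ^ 3)) =
          ((5/2)) + ((-25/6)*s) * 0 + ((-5/2)) * 1 + ((-5/2)) * 0 ^ 2 + ((5/6)*s) * (0 * 1) + 0 * 1 ^ 2 + ((25/6)*s) * 0 ^ 3 + ((5/2)) * (0 ^ 2 * 1) + 0 * (0 * 1 ^ 2) + 0 * 1 ^ 3 + ((-25/12)*s) * (0 ^ 3 * 1 - 0 * 1 ^ 3) :=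
        eval_expansion _ _ _ _ _ _ _ _ _ _ _ 0 1
      exact t.trans (by linear_combination ((0:ℝ)) * hs2)
    · have t : eval ![(g 8).1, (g 8).2] (PE ((5/2)) ((-25/6)*s) ((-5/2)) ((-5/2)) ((5/6)*s) 0 ((25/6)*s) ((5/2)) 0 0 + C ((-25/12)*s) * (X 0 ^ 3 * X 1 - X 0 * X 1 ^ 3)) =
          ((5/2)) + ((-25/6)*s) * (-s) + ((-5/2)) * 1 + ((-5/2)) * (-s) ^ 2 + ((5/6)*s) * ((-s) * 1) + 0 * 1 ^ 2 + ((25/6)*s) * (-s) ^ 3 + ((5/2)) * ((-s) ^ 2 * 1) + 0 * ((-s) * 1 ^ 2) + 0 * 1 ^ 3 + ((-25/12)*s) * ((-s) ^ 3 * 1 - (-s) * 1 ^ 3) :=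
        eval_expansion _ _ _ _ _ _ _ _ _ _ _ (-s) 1
      exact t.trans (by linear_combination ((-25/12)*s^2) * hs2)
    · have t : eval ![(g 9).1, (g 9).2] (PE ((5/2)) ((-25/6)*s) ((-5/2)) ((-5/2)) ((5/6)*s) 0 ((25/6)*s) ((5/2)) 0 0 + C ((-25/12)*s) * (X 0 ^ 3 * X 1 - X 0 * X 1 ^ 3)) =
          ((5/2)) + ((-25/6)*s) * (-1) + ((-5/2)) * s + ((-5/2)) * (-1) ^ 2 + ((5/6)*s) * ((-1) * s) + 0 * s ^ 2 + ((25/6)*s) * (-1) ^ 3 + ((5/2)) * ((-1) ^ 2 * s) + 0 * ((-1) * s ^ 2) + 0 * s ^ 3 + ((-25/12)*s) * ((-1) ^ 3 * s - (-1) * s ^ 3) :=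
        eval_expansion _ _ _ _ _ _ _ _ _ _ _ (-1) s
      exact t.trans (by linear_combination ((-25/12)*s^2) * hs2)
    · have t : eval ![(g 10).1, (g 10).2] (PE ((5/2)) ((-25/6)*s) ((-5/2)) ((-5/2)) ((5/6)*s) 0 ((25/6)*s) ((5/2)) 0 0 + C ((-25/12)*s) * (X 0 ^ 3 * X 1 - X 0 * X 1 ^ 3)) =
          ((5/2)) + ((-25/6)*s) * (-1) + ((-5/2)) * 0 + ((-5/2)) * (-1) ^ 2 + ((5/6)*s) * ((-1) * 0) + 0 * 0 ^ 2 + ((25/6)*s) * (-1) ^ 3 + ((5/2)) * ((-1) ^ 2 * 0) + 0 * ((-1) * 0 ^ 2) + 0 * 0 ^ 3 + ((-25/12)*s) * ((-1) ^ 3 * 0 - (-1) * 0 ^ 3) :=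
        eval_expansion _ _ _ _ _ _ _ _ _ _ _ (-1) 0
      exact t.trans (by linear_combination ((0:ℝ)) * hs2)
    · have t : eval ![(g 11).1, (g 11).2] (PE ((5/2)) ((-25/6)*s) ((-5/2)) ((-5/2)) ((5/6)*s) 0 ((25/6)*s) ((5/2)) 0 0 + C ((-25/12)*s) * (X 0 ^ 3 * X 1 - X 0 * X 1 ^ 3)) =
          ((5/2)) + ((-25/6)*s) * (-1) + ((-5/2)) * (-s) + ((-5/2)) * (-1) ^ 2 + ((5/6)*s) * ((-1) * (-s)) + 0 * (-s) ^ 2 + ((25/6)*s) * (-1) ^ 3 + ((5/2)) * ((-1) ^ 2 * (-s)) + 0 * ((-1) * (-s) ^ 2) + 0 * (-s) ^ 3 + ((-25/12)*s) * ((-1) ^ 3 * (-s) - (-1) * (-s) ^ 3) :=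
        eval_expansion _ _ _ _ _ _ _ _ _ _ _ (-1) (-s)
      exact t.trans (by linear_combination ((25/12)*s^2) * hs2)
  · rintro ψ ⟨⟨p, c, hp, rfl⟩, h1', h2', h3'⟩
    have hrep := P3_rep p hp
    have E1 : eval ![(-s), (-1)] (p + C c * (X 0 ^ 3 * X 1 - X 0 * X 1 ^ 3)) = 4 := h1'
    have t1 := eval_expansion (coeff (e 0 0) p) (coeff (e 1 0) p) (coeff (e 0 1) p) (coeff (e 2 0) p) (coeff (e 1 1) p) (coeff (e 0 2) p) (coeff (e 3 0) p) (coeff (e 2 1) p) (coeff (e 1 2) p) (coeff (e 0 3) p) c (-s) (-1)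
    rw [← hrep] at t1
    have H1 := t1.symm.trans E1
    have E2 : eval ![0, (-1)] (p + C c * (X 0 ^ 3 * X 1 - X 0 * X 1 ^ 3)) = 5 := h2'
    have t2 := eval_expansion (coeff (e 0 0) p) (coeff (e 1 0) p) (coeff (e 0 1) p) (coeff (e 2 0) p) (coeff (e 1 1) p) (coeff (e 0 2) p) (coeff (e 3 0) p) (coeff (e 2 1) p) (coeff (e 1 2) p) (coeff (e 0 3) p) c 0 (-1)
    rw [← hrep] at t2
    have H2 := t2.symm.trans E2
    have E3 : eval ![s, (-1)] (p + C c * (X 0 ^ 3 * X 1 - X 0 * X 1 ^ 3)) = 0 := h3' 2 (by decide) (by decide)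
    have t3 := eval_expansion (coeff (e 0 0) p) (coeff (e 1 0) p) (coeff (e 0 1) p) (coeff (e 2 0) p) (coeff (e 1 1) p) (coeff (e 0 2) p) (coeff (e 3 0) p) (coeff (e 2 1) p) (coeff (e 1 2) p) (coeff (e 0 3) p) c s (-1)
    rw [← hrep] at t3
    have H3 := t3.symm.trans E3
    have E4 : eval ![1, (-s)] (p + C c * (X 0 ^ 3 * X 1 - X 0 * X 1 ^ 3)) = 0 := h3' 3 (by decide) (by decide)
    have t4 := eval_expansion (coeff (e 0 0) p) (coeff (e 1 0) p) (coeff (e 0 1) p) (coeff (e 2 0) p) (coeff (e 1 1) p) (coeff (e 0 2) p) (coeff (e 3 0) p) (coeff (e 2 1) p) (coeff (e 1 2) p) (coeff (e 0 3) p) c 1 (-s)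
    rw [← hrep] at t4
    have H4 := t4.symm.trans E4
    have E5 : eval ![1, 0] (p + C c * (X 0 ^ 3 * X 1 - X 0 * X 1 ^ 3)) = 0 := h3' 4 (by decide) (by decide)
    have t5 := eval_expansion (coeff (e 0 0) p) (coeff (e 1 0) p) (coeff (e 0 1) p) (coeff (e 2 0) p) (coeff (e 1 1) p) (coeff (e 0 2) p) (coeff (e 3 0) p) (coeff (e 2 1) p) (coeff (e 1 2) p) (coeff (e 0 3) p) c 1 0
    rw [← hrep] at t5
    have H5 := t5.symm.trans E5
    have E6 : eval ![1, s] (p + C c * (X 0 ^ 3 * X 1 - X 0 * X 1 ^ 3)) = 0 := h3' 5 (by decide) (by decide)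
    have t6 := eval_expansion (coeff (e 0 0) p) (coeff (e 1 0) p) (coeff (e 0 1) p) (coeff (e 2 0) p) (coeff (e 1 1) p) (coeff (e 0 2) p) (coeff (e 3 0) p) (coeff (e 2 1) p) (coeff (e 1 2) p) (coeff (e 0 3) p) c 1 s
    rw [← hrep] at t6
    have H6 := t6.symm.trans E6
    have E7 : eval ![s, 1] (p + C c * (X 0 ^ 3 * X 1 - X 0 * X 1 ^ 3)) = 0 := h3' 6 (by decide) (by decide)
    have t7 := eval_expansion (coeff (e 0 0) p) (coeff (e 1 0) p) (coeff (e 0 1) p) (coeff (e 2 0) p) (coeff (e 1 1) p) (coeff (e 0 2) p) (coeff (e 3 0) p) (coeff (e 2 1) p) (coeff (e 1 2) p) (coeff (e 0 3) p) c s 1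
    rw [← hrep] at t7
    have H7 := t7.symm.trans E7
    have E8 : eval ![0, 1] (p + C c * (X 0 ^ 3 * X 1 - X 0 * X 1 ^ 3)) = 0 := h3' 7 (by decide) (by decide)
    have t8 := eval_expansion (coeff (e 0 0) p) (coeff (e 1 0) p) (coeff (e 0 1) p) (coeff (e 2 0) p) (coeff (e 1 1) p) (coeff (e 0 2) p) (coeff (e 3 0) p) (coeff (e 2 1) p) (coeff (e 1 2) p) (coeff (e 0 3) p) c 0 1
    rw [← hrep] at t8
    have H8 := t8.symm.trans E8
    have E9 : eval ![(-s), 1] (p + C c * (X 0 ^ 3 * X 1 - X 0 * X 1 ^ 3)) = 0 := h3' 8 (by decide) (by decide)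
    have t9 := eval_expansion (coeff (e 0 0) p) (coeff (e 1 0) p) (coeff (e 0 1) p) (coeff (e 2 0) p) (coeff (e 1 1) p) (coeff (e 0 2) p) (coeff (e 3 0) p) (coeff (e 2 1) p) (coeff (e 1 2) p) (coeff (e 0 3) p) c (-s) 1
    rw [← hrep] at t9
    have H9 := t9.symm.trans E9
    have E10 : eval ![(-1), s] (p + C c * (X 0 ^ 3 * X 1 - X 0 * X 1 ^ 3)) = 0 := h3' 9 (by decide) (by decide)
    have t10 := eval_expansion (coeff (e 0 0) p) (coeff (e 1 0) p) (coeff (e 0 1) p) (coeff (e 2 0) p) (coeff (e 1 1) p) (coeff (e 0 2) p) (coeff (e 3 0) p) (coeff (e 2 1) p) (coeff (e 1 2) p) (coeff (e 0 3) p) c (-1) s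
    rw [← hrep] at t10
    have H10 := t10.symm.trans E10
    have E11 : eval ![(-1), 0] (p + C c * (X 0 ^ 3 * X 1 - X 0 * X 1 ^ 3)) = 0 := h3' 10 (by decide) (by decide)
    have t11 := eval_expansion (coeff (e 0 0) p) (coeff (e 1 0) p) (coeff (e 0 1) p) (coeff (e 2 0) p) (coeff (e 1 1) p) (coeff (e 0 2) p) (coeff (e 3 0) p) (coeff (e 2 1) p) (coeff (e 1 2) p) (coeff (e 0 3) p) c (-1) 0
    rw [← hrep] at t11
    have H11 := t11.symm.trans E11
    have E12 : eval ![(-1), (-s)] (p + C c * (X 0 ^ 3 * X 1 - X 0 * X 1 ^ 3)) = 0 := h3' 11 (by decide) (by decide)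
    have t12 := eval_expansion (coeff (e 0 0) p) (coeff (e 1 0) p) (coeff (e 0 1) p) (coeff (e 2 0) p) (coeff (e 1 1) p) (coeff (e 0 2) p) (coeff (e 3 0) p) (coeff (e 2 1) p) (coeff (e 1 2) p) (coeff (e 0 3) p) c (-1) (-s)
    rw [← hrep] at t12
    have H12 := t12.symm.trans E12
    have ha00 : (coeff (e 0 0) p) = (5/2) := by
      linear_combination ((-5/12)) * H1 + ((5/6)) * H2 + ((-5/12)) * H3 + ((1/2)) * H5 + ((-5/12)) * H7 + ((5/6)) * H8 + ((-5/12)) * H9 + ((1/2)) * H11 + (((5/3)) * (coeff (e 2 0) p)) * hs2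
    have ha10 : (coeff (e 1 0) p) = (-25/6)*s := by
      linear_combination ((25/24) + (-25/24)*s) * H1 + ((-5/6)) * H2 + ((25/24) + (25/24)*s) * H3 + ((-25/12)) * H4 + ((13/6)) * H5 + ((-25/12)) * H6 + ((25/24) + (25/24)*s) * H7 + ((-5/6)) * H8 + ((25/24) + (-25/24)*s) * H9 + ((-1/2)) * H11 + (((-25/6)) * (coeff (e 1 0) p) + ((-25/6)) * (coeff (e 2 0) p) + ((25/6)) * (coeff (e 0 2) p) + ((-5/2) + (-25/6)*s^2) * (coeff (e 3 0) p)) * hs2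
    have ha01 : (coeff (e 0 1) p) = (-5/2) := by
      linear_combination ((25/24) + (-25/24)*s) * H1 + ((-4/3) + (5/6)*s) * H2 + ((25/24) + (-25/24)*s) * H3 + ((-5/6)*s) * H5 + ((25/12)*s) * H6 + ((-25/24) + (-25/24)*s) * H7 + ((4/3) + (5/6)*s) * H8 + ((-25/24) + (-25/24)*s) * H9 + ((25/12)*s) * H10 + ((-5/6)*s) * H11 + (((-25/6)) * (coeff (e 0 1) p) + ((25/6)*s) * (coeff (e 2 0) p) + ((-25/6)*s) * (coeff (e 0 2) p) + ((-5/2) + (-25/6)*s^2) * (coeff (e 0 3) p)) * hs2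
    have ha20 : (coeff (e 2 0) p) = (-5/2) := by
      linear_combination ((5/12)) * H1 + ((-5/6)) * H2 + ((5/12)) * H3 + ((5/12)) * H7 + ((-5/6)) * H8 + ((5/12)) * H9 + (((-5/3)) * (coeff (e 2 0) p)) * hs2
    have ha11 : (coeff (e 1 1) p) = (5/6)*s := by
      linear_combination ((5/12)*s) * H1 + ((-1/6)*s) * H2 + ((-5/12)*s) * H4 + ((1/6)*s) * H5 + ((5/12)*s) * H7 + ((-1/6)*s) * H8 + ((-5/12)*s) * H10 + ((1/6)*s) * H11 + (((-5/6)*s) * (coeff (e 2 0) p) + ((-5/3)) * (coeff (e 1 1) p) + ((5/6)*s) * (coeff (e 0 2) p)) * hs2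
    have ha02 : (coeff (e 0 2) p) = 0 := by
      linear_combination ((5/12)) * H1 + ((-1/3)) * H2 + ((5/12)) * H3 + ((-1/2)) * H5 + ((5/12)) * H7 + ((-1/3)) * H8 + ((5/12)) * H9 + ((-1/2)) * H11 + (((-5/3)) * (coeff (e 2 0) p)) * hs2
    have ha30 : (coeff (e 3 0) p) = (25/6)*s := by
      linear_combination ((-25/24) + (25/24)*s) * H1 + ((5/6)) * H2 + ((-25/24) + (-25/24)*s) * H3 + ((25/12)) * H4 + ((-5/3)) * H5 + ((25/12)) * H6 + ((-25/24) + (-25/24)*s) * H7 + ((5/6)) * H8 + ((-25/24) + (25/24)*s) * H9 + (((25/6)) * (coeff (e 1 0) p) + ((25/6)) * (coeff (e 2 0) p) + ((-25/6)) * (coeff (e 0 2) p) + ((5/2) + (25/6)*s^2) * (coeff (e 3 0) p)) * hs2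
    have ha21 : (coeff (e 2 1) p) = (5/2) := by
      linear_combination ((-5/12)) * H1 + ((5/6)) * H2 + ((-5/12)) * H3 + ((5/12)) * H7 + ((-5/6)) * H8 + ((5/12)) * H9 + (((-5/3)) * (coeff (e 2 1) p)) * hs2
    have ha12 : (coeff (e 1 2) p) = 0 := by
      linear_combination ((-5/12)) * H1 + ((1/3)) * H2 + ((-5/12)) * H3 + ((5/6)) * H4 + ((-7/6)) * H5 + ((5/6)) * H6 + ((-5/12)) * H7 + ((1/3)) * H8 + ((-5/12)) * H9 + ((1/2)) * H11 + (((5/3)) * (coeff (e 2 0) p) + ((-5/3)) * (coeff (e 0 2) p) + ((-5/3)) * (coeff (e 1 2) p)) * hs2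
    have ha03 : (coeff (e 0 3) p) = 0 := by
      linear_combination ((-25/24) + (25/24)*s) * H1 + ((5/6) + (-5/6)*s) * H2 + ((-25/24) + (25/24)*s) * H3 + ((5/6)*s) * H5 + ((-25/12)*s) * H6 + ((25/24) + (25/24)*s) * H7 + ((-5/6) + (-5/6)*s) * H8 + ((25/24) + (25/24)*s) * H9 + ((-25/12)*s) * H10 + ((5/6)*s) * H11 + (((25/6)) * (coeff (e 0 1) p) + ((-25/6)*s) * (coeff (e 2 0) p) + ((25/6)*s) * (coeff (e 0 2) p) + ((5/2) + (25/6)*s^2) * (coeff (e 0 3) p)) * hs2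
    have hc : c = (-25/12)*s := by
      linear_combination ((-5/12)*s) * H2 + ((25/24)*s) * H3 + ((-25/24)*s) * H4 + ((5/12)*s) * H5 + ((-5/12)*s) * H8 + ((25/24)*s) * H9 + ((-25/24)*s) * H10 + ((5/12)*s) * H11 + (((-25/12)*s) * (coeff (e 2 0) p) + ((25/12)*s) * (coeff (e 0 2) p) + ((-5/3) + (25/6)*s^2) * c) * hs2
    rw [hrep, ha00, ha10, ha01, ha20, ha11, ha02, ha30, ha21, ha12, ha03, hc]
end

section
/- Let φⱼ^V (j = 1,2,3,4) be the unique elements of P̂ = P₃ ⊕ span{x³y − xy³} taking the value 1 at the two Gauss points of [−1,1]² nearest the vertex Vⱼ and 0 at the other ten Gauss points, and let φⱼ^{E₊} (respectively φⱼ^{E₋}) be the unique elements of P̂ taking the value 5 at the midpoint Gauss point of edge Eⱼ, the value 4 at the Gauss point Mⱼ⁺ (respectively Mⱼ⁻) of edge Eⱼ, and 0 at the other ten Gauss points. Then any eleven of these twelve functions form a basis of the 11-dimensional space P̂; in particular the twelve functions span P̂. -/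
open MvPolynomial

/-- Prescribed Gauss-point values of the twelve functions
`φ₁^V, …, φ₄^V, φ₁^{E₊}, …, φ₄^{E₊}, φ₁^{E₋}, …, φ₄^{E₋}` (in this order):
`vals j k` is the value of the `j`-th function at the Gauss point `g k`.
The vertex functions (rows 0–3, for vertices `(-1,-1), (1,-1), (1,1), (-1,1)`)
take the value 1 at the two Gauss points nearest the vertex and 0 elsewhere;
the edge functions (rows 4–7 for `E₊`, rows 8–11 for `E₋`) take the value 5 at
the midpoint of the edge, 4 at `Mⱼ⁺` (resp. `Mⱼ⁻`), and 0 elsewhere. -/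
noncomputable def vals : Fin 12 → Fin 12 → ℝ :=
  ![![1, 0, 0, 0, 0, 0, 0, 0, 0, 0, 0, 1],
    ![0, 0, 1, 1, 0, 0, 0, 0, 0, 0, 0, 0],
    ![0, 0, 0, 0, 0, 1, 1, 0, 0, 0, 0, 0],
    ![0, 0, 0, 0, 0, 0, 0, 0, 1, 1, 0, 0],
    ![4, 5, 0, 0, 0, 0, 0, 0, 0, 0, 0, 0],
    ![0, 0, 0, 4, 5, 0, 0, 0, 0, 0, 0, 0],
    ![0, 0, 0, 0, 0, 0, 4, 5, 0, 0, 0, 0],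
    ![0, 0, 0, 0, 0, 0, 0, 0, 0, 4, 5, 0],
    ![0, 5, 4, 0, 0, 0, 0, 0, 0, 0, 0, 0],
    ![0, 0, 0, 0, 5, 4, 0, 0, 0, 0, 0, 0],
    ![0, 0, 0, 0, 0, 0, 0, 5, 4, 0, 0, 0],
    ![0, 0, 0, 0, 0, 0, 0, 0, 0, 0, 5, 4]]

noncomputable def aa : Fin 12 → ℝ := ![-4, 4, -4, 4, 1, -1, 1, -1, -1, 1, -1, 1]

lemma sum12 {M : Type*} [AddCommMonoid M] (f : Fin 12 → M) :
    (∑ j, f j) = f 0 + f 1 + f 2 + f 3 + f 4 + f 5 + f 6 + f 7 + f 8 + f 9 + f 10 + f 11 := by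
  simp [Fin.sum_univ_succ, add_assoc]

lemma kernel_struct (c : Fin 12 → ℝ)
    (h : ∀ k : Fin 12, (∑ j, c j * vals j k) = 0) :
    ∀ j, c j = aa j * c 4 := by
  have e0 : c 0 * 1 + c 1 * 0 + c 2 * 0 + c 3 * 0 + c 4 * 4 + c 5 * 0 + c 6 * 0 + c 7 * 0 + c 8 * 0 + c 9 * 0 + c 10 * 0 + c 11 * 0 = 0 := (sum12 (fun j => c j * vals j 0)).symm.trans (h 0)
  have e1 : c 0 * 0 + c 1 * 0 + c 2 * 0 + c 3 * 0 + c 4 * 5 + c 5 * 0 + c 6 * 0 + c 7 * 0 + c 8 * 5 + c 9 * 0 + c 10 * 0 + c 11 * 0 = 0 := (sum12 (fun j => c j * vals j 1)).symm.trans (h 1)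
  have e2 : c 0 * 0 + c 1 * 1 + c 2 * 0 + c 3 * 0 + c 4 * 0 + c 5 * 0 + c 6 * 0 + c 7 * 0 + c 8 * 4 + c 9 * 0 + c 10 * 0 + c 11 * 0 = 0 := (sum12 (fun j => c j * vals j 2)).symm.trans (h 2)
  have e3 : c 0 * 0 + c 1 * 1 + c 2 * 0 + c 3 * 0 + c 4 * 0 + c 5 * 4 + c 6 * 0 + c 7 * 0 + c 8 * 0 + c 9 * 0 + c 10 * 0 + c 11 * 0 = 0 := (sum12 (fun j => c j * vals j 3)).symm.trans (h 3)
  have e4 : c 0 * 0 + c 1 * 0 + c 2 * 0 + c 3 * 0 + c 4 * 0 + c 5 * 5 + c 6 * 0 + c 7 * 0 + c 8 * 0 + c 9 * 5 + c 10 * 0 + c 11 * 0 = 0 := (sum12 (fun j => c j * vals j 4)).symm.trans (h 4)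
  have e5 : c 0 * 0 + c 1 * 0 + c 2 * 1 + c 3 * 0 + c 4 * 0 + c 5 * 0 + c 6 * 0 + c 7 * 0 + c 8 * 0 + c 9 * 4 + c 10 * 0 + c 11 * 0 = 0 := (sum12 (fun j => c j * vals j 5)).symm.trans (h 5)
  have e6 : c 0 * 0 + c 1 * 0 + c 2 * 1 + c 3 * 0 + c 4 * 0 + c 5 * 0 + c 6 * 4 + c 7 * 0 + c 8 * 0 + c 9 * 0 + c 10 * 0 + c 11 * 0 = 0 := (sum12 (fun j => c j * vals j 6)).symm.trans (h 6)
  have e7 : c 0 * 0 + c 1 * 0 + c 2 * 0 + c 3 * 0 + c 4 * 0 + c 5 * 0 + c 6 * 5 + c 7 * 0 + c 8 * 0 + c 9 * 0 + c 10 * 5 + c 11 * 0 = 0 := (sum12 (fun j => c j * vals j 7)).symm.trans (h 7)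
  have e8 : c 0 * 0 + c 1 * 0 + c 2 * 0 + c 3 * 1 + c 4 * 0 + c 5 * 0 + c 6 * 0 + c 7 * 0 + c 8 * 0 + c 9 * 0 + c 10 * 4 + c 11 * 0 = 0 := (sum12 (fun j => c j * vals j 8)).symm.trans (h 8)
  have e9 : c 0 * 0 + c 1 * 0 + c 2 * 0 + c 3 * 1 + c 4 * 0 + c 5 * 0 + c 6 * 0 + c 7 * 4 + c 8 * 0 + c 9 * 0 + c 10 * 0 + c 11 * 0 = 0 := (sum12 (fun j => c j * vals j 9)).symm.trans (h 9)
  have e10 : c 0 * 0 + c 1 * 0 + c 2 * 0 + c 3 * 0 + c 4 * 0 + c 5 * 0 + c 6 * 0 + c 7 * 5 + c 8 * 0 + c 9 * 0 + c 10 * 0 + c 11 * 5 = 0 := (sum12 (fun j => c j * vals j 10)).symm.trans (h 10)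
  have e11 : c 0 * 1 + c 1 * 0 + c 2 * 0 + c 3 * 0 + c 4 * 0 + c 5 * 0 + c 6 * 0 + c 7 * 0 + c 8 * 0 + c 9 * 0 + c 10 * 0 + c 11 * 4 = 0 := (sum12 (fun j => c j * vals j 11)).symm.trans (h 11)
  have a0 : c 0 = aa 0 * c 4 := by rw [show aa 0 = (-4 : ℝ) from rfl]; linarith
  have a1 : c 1 = aa 1 * c 4 := by rw [show aa 1 = (4 : ℝ) from rfl]; linarith
  have a2 : c 2 = aa 2 * c 4 := by rw [show aa 2 = (-4 : ℝ) from rfl]; linarith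
  have a3 : c 3 = aa 3 * c 4 := by rw [show aa 3 = (4 : ℝ) from rfl]; linarith
  have a4 : c 4 = aa 4 * c 4 := by rw [show aa 4 = (1 : ℝ) from rfl]; linarith
  have a5 : c 5 = aa 5 * c 4 := by rw [show aa 5 = (-1 : ℝ) from rfl]; linarith
  have a6 : c 6 = aa 6 * c 4 := by rw [show aa 6 = (1 : ℝ) from rfl]; linarith
  have a7 : c 7 = aa 7 * c 4 := by rw [show aa 7 = (-1 : ℝ) from rfl]; linarith
  have a8 : c 8 = aa 8 * c 4 := by rw [show aa 8 = (-1 : ℝ) from rfl]; linarith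
  have a9 : c 9 = aa 9 * c 4 := by rw [show aa 9 = (1 : ℝ) from rfl]; linarith
  have a10 : c 10 = aa 10 * c 4 := by rw [show aa 10 = (-1 : ℝ) from rfl]; linarith
  have a11 : c 11 = aa 11 * c 4 := by rw [show aa 11 = (1 : ℝ) from rfl]; linarith
  intro j; fin_cases j
  · exact a0
  · exact a1
  · exact a2
  · exact a3
  · exact a4
  · exact a5
  · exact a6
  · exact a7
  · exact a8
  · exact a9
  · exact a10
  · exact a11

lemma aa_ne (i : Fin 12) : aa i ≠ 0 := by fin_cases i <;> norm_num [aa]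

lemma kernel_zero (c : Fin 12 → ℝ)
    (h : ∀ k : Fin 12, (∑ j, c j * vals j k) = 0) (i : Fin 12) (hi : c i = 0) :
    ∀ j, c j = 0 := by
  have hs := kernel_struct c h
  have h4 : c 4 = 0 := by
    have hh := hs i
    rw [hi] at hh
    rcases mul_eq_zero.mp hh.symm with h' | h'
    · exact absurd h' (aa_ne i)
    · exact h'
  intro j; rw [hs j, h4, mul_zero]

noncomputable def B : Fin 11 → MvPolynomial (Fin 2) ℝ :=
  ![1, X 0, X 1, X 0^2, X 0*X 1, X 1^2, X 0^3, X 0^2*X 1, X 0*X 1^2, X 1^3,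
    X 0 ^ 3 * X 1 - X 0 * X 1 ^ 3]

lemma P3_le_span :
    restrictTotalDegree (Fin 2) ℝ 3 ≤ Submodule.span ℝ (Set.range B) := by
  intro p hp
  rw [mem_restrictTotalDegree] at hp
  rw [p.as_sum]
  apply Submodule.sum_mem
  intro d hd
  have hsum : (d.sum fun _ e => e) = d 0 + d 1 := by
    rw [Finsupp.sum_fintype]
    · exact Fin.sum_univ_two _
    · intro _; rfl
  have hdeg : d 0 + d 1 ≤ 3 := by
    rw [← hsum]; exact (le_totalDegree hd).trans hp
  have hm : (monomial d (coeff d p) : MvPolynomial (Fin 2) ℝ)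
      = (coeff d p) • (X 0 ^ (d 0) * X 1 ^ (d 1)) := by
    rw [monomial_eq, Finsupp.prod_fintype, Fin.prod_univ_two, smul_eq_C_mul]
    intro _; exact pow_zero _
  rw [hm]
  apply Submodule.smul_mem
  apply Submodule.subset_span
  have h0 : d 0 ≤ 3 := by omega
  have h1 : d 1 ≤ 3 := by omega
  interval_cases (d 0) <;> interval_cases (d 1)
  · exact ⟨0, by rw [show B 0 = (1 : MvPolynomial (Fin 2) ℝ) from rfl]; ring⟩
  · exact ⟨2, by rw [show B 2 = (X 1 : MvPolynomial (Fin 2) ℝ) from rfl]; ring⟩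
  · exact ⟨5, by rw [show B 5 = (X 1^2 : MvPolynomial (Fin 2) ℝ) from rfl]; ring⟩
  · exact ⟨9, by rw [show B 9 = (X 1^3 : MvPolynomial (Fin 2) ℝ) from rfl]; ring⟩
  · exact ⟨1, by rw [show B 1 = (X 0 : MvPolynomial (Fin 2) ℝ) from rfl]; ring⟩
  · exact ⟨4, by rw [show B 4 = (X 0*X 1 : MvPolynomial (Fin 2) ℝ) from rfl]; ring⟩
  · exact ⟨8, by rw [show B 8 = (X 0*X 1^2 : MvPolynomial (Fin 2) ℝ) from rfl]; ring⟩
  · exact absurd hdeg (by norm_num)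
  · exact ⟨3, by rw [show B 3 = (X 0^2 : MvPolynomial (Fin 2) ℝ) from rfl]; ring⟩
  · exact ⟨7, by rw [show B 7 = (X 0^2*X 1 : MvPolynomial (Fin 2) ℝ) from rfl]; ring⟩
  · exact absurd hdeg (by norm_num)
  · exact absurd hdeg (by norm_num)
  · exact ⟨6, by rw [show B 6 = (X 0^3 : MvPolynomial (Fin 2) ℝ) from rfl]; ring⟩
  · exact absurd hdeg (by norm_num)
  · exact absurd hdeg (by norm_num)
  · exact absurd hdeg (by norm_num)

/-- Lemma 2.5: if `f 0, …, f 11` are the twelve functions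
`φⱼ^V, φⱼ^{E₊}, φⱼ^{E₋}` of `P̂ = P₃ ⊕ span{x³y - xy³}` determined by the Gauss-point
values `vals`, then any eleven of them form a basis (a linearly independent spanning
family) of `P̂`; in particular all twelve span `P̂`. -/
theorem any_eleven_form_basis (f : Fin 12 → MvPolynomial (Fin 2) ℝ)
    (hmem : ∀ j, ∃ (p : MvPolynomial (Fin 2) ℝ) (c : ℝ), p.totalDegree ≤ 3 ∧
      f j = p + C c * (X 0 ^ 3 * X 1 - X 0 * X 1 ^ 3))
    (hval : ∀ j k : Fin 12, eval ![(g k).1, (g k).2] (f j) = vals j k) :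
    (∀ i : Fin 12,
      LinearIndependent ℝ (fun j : {j : Fin 12 // j ≠ i} => f j) ∧
      Submodule.span ℝ (f '' {j | j ≠ i})
        = restrictTotalDegree (Fin 2) ℝ 3
            ⊔ Submodule.span ℝ {X 0 ^ 3 * X 1 - X 0 * X 1 ^ 3}) ∧
    Submodule.span ℝ (Set.range f)
      = restrictTotalDegree (Fin 2) ℝ 3
          ⊔ Submodule.span ℝ {X 0 ^ 3 * X 1 - X 0 * X 1 ^ 3} := by
  classical
  have hfm : ∀ j, f j ∈ (restrictTotalDegree (Fin 2) ℝ 3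
      ⊔ Submodule.span ℝ {X 0 ^ 3 * X 1 - X 0 * X 1 ^ 3} : Submodule ℝ (MvPolynomial (Fin 2) ℝ)) := by
    intro j
    obtain ⟨p, c, hdeg, hfj⟩ := hmem j
    rw [hfj]
    apply Submodule.add_mem
    · exact Submodule.mem_sup_left ((mem_restrictTotalDegree _ _ _).mpr hdeg)
    · apply Submodule.mem_sup_right
      rw [← smul_eq_C_mul]
      exact Submodule.smul_mem _ _ (Submodule.subset_span rfl)
  have hPle : (restrictTotalDegree (Fin 2) ℝ 3
      ⊔ Submodule.span ℝ {X 0 ^ 3 * X 1 - X 0 * X 1 ^ 3} : Submodule ℝ (MvPolynomial (Fin 2) ℝ))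
      ≤ Submodule.span ℝ (Set.range B) :=
    sup_le P3_le_span
      (Submodule.span_le.mpr (Set.singleton_subset_iff.mpr (Submodule.subset_span ⟨10, rfl⟩)))
  haveI : FiniteDimensional ℝ (Submodule.span ℝ (Set.range B)) :=
    FiniteDimensional.span_of_finite ℝ (Set.finite_range B)
  haveI : FiniteDimensional ℝ (restrictTotalDegree (Fin 2) ℝ 3
      ⊔ Submodule.span ℝ {X 0 ^ 3 * X 1 - X 0 * X 1 ^ 3} : Submodule ℝ (MvPolynomial (Fin 2) ℝ)) :=
    Submodule.finiteDimensional_of_le hPle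
  have hrank : Module.finrank ℝ (restrictTotalDegree (Fin 2) ℝ 3
      ⊔ Submodule.span ℝ {X 0 ^ 3 * X 1 - X 0 * X 1 ^ 3} : Submodule ℝ (MvPolynomial (Fin 2) ℝ)) ≤ 11 :=
    le_trans (Submodule.finrank_mono hPle) ((finrank_range_le_card B).trans (by simp))
  have hind : ∀ i : Fin 12, LinearIndependent ℝ (fun j : {j : Fin 12 // j ≠ i} => f j) := by
    intro i
    rw [Fintype.linearIndependent_iff]
    intro cc hcc j
    set c' : Fin 12 → ℝ := fun j => if h : j = i then 0 else cc ⟨j, h⟩ with hc'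
    have hci : c' i = 0 := dif_pos rfl
    have hcs : ∀ j : {j : Fin 12 // j ≠ i}, c' j = cc j := by
      intro j
      simp only [hc', dif_neg j.2]
    have hsum : (∑ j, c' j • f j) = 0 := by
      rw [← hcc]
      rw [← Finset.sum_erase Finset.univ (by rw [hci, zero_smul])]
      rw [Finset.sum_subtype (p := fun j => j ≠ i) (Finset.univ.erase i) (by simp)
        (fun j => c' j • f j)]
      exact Finset.sum_congr rfl fun j _ => by rw [hcs j]
    have heval : ∀ k : Fin 12, (∑ j, c' j * vals j k) = 0 := by
      intro k
      have h2 := congrArg (eval ![(g k).1, (g k).2]) hsum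
      rw [map_sum, map_zero] at h2
      simp only [smul_eval, hval] at h2
      exact h2
    have hz := kernel_zero c' heval i hci
    rw [← hcs j]
    exact hz j
  have hmain : ∀ i : Fin 12,
      LinearIndependent ℝ (fun j : {j : Fin 12 // j ≠ i} => f j) ∧
      Submodule.span ℝ (f '' {j | j ≠ i})
        = restrictTotalDegree (Fin 2) ℝ 3
            ⊔ Submodule.span ℝ {X 0 ^ 3 * X 1 - X 0 * X 1 ^ 3} := by
    intro i
    refine ⟨hind i, ?_⟩
    have hle : Submodule.span ℝ (f '' {j | j ≠ i})
        ≤ restrictTotalDegree (Fin 2) ℝ 3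
            ⊔ Submodule.span ℝ {X 0 ^ 3 * X 1 - X 0 * X 1 ^ 3} := by
      rw [Submodule.span_le]
      rintro x ⟨j, _, rfl⟩
      exact hfm j
    have hfr : Module.finrank ℝ (Submodule.span ℝ (f '' {j | j ≠ i})) = 11 := by
      have himg : f '' {j | j ≠ i} = Set.range (fun j : {j : Fin 12 // j ≠ i} => f j) := by
        ext x
        simp [Set.mem_image, Set.mem_range, Subtype.exists, eq_comm]
      rw [himg, finrank_span_eq_card (hind i)]
      rw [Fintype.card_subtype_compl, Fintype.card_subtype_eq]
      simp
    exact Submodule.eq_of_le_of_finrank_le hle (hrank.trans hfr.ge)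
  refine ⟨hmain, le_antisymm ?_ ?_⟩
  · rw [Submodule.span_le]
    rintro x ⟨j, rfl⟩
    exact hfm j
  · rw [← (hmain 0).2]
    exact Submodule.span_mono (Set.image_subset_range f _)
end
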